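/- arXiv:2009.13617 — 2 statements merged into one kernel-verified Lean document; each statement's English description precedes it below -/
import Mathlib

section
/- For every real x ≥ 1 and every real s ≥ 1, s(x^s + x - x^{s-1} - 1) - x^s + 1 ≥ 0. -/
/-! By convexity of `t ↦ t ^ s` (Bernoulli's inequality), its tangent line at `x` lies below
it at `1`: `s x ^ (s - 1) ≤ 1 + (s - 1) x ^ s`. Substituting this leaves `s (x - 1) ≥ 0`. -/

open Real

theorem Real.rpow_add_mul_rpow_sub_one_mul_sub_le {x y p : ℝ} (hx : 0 < x) (hy : 0 ≤ y)
    (hp : 1 ≤ p) : x ^ p + p * x ^ (p - 1) * (y - x) ≤ y ^ p := by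
  have bernoulli := one_add_mul_self_le_rpow_one_add (s := y / x - 1)
    (by linarith [div_nonneg hy hx.le]) hp
  rw [add_sub_cancel, div_rpow hy hx.le] at bernoulli
  have hxp : 0 < x ^ p := rpow_pos_of_pos hx p
  calc x ^ p + p * x ^ (p - 1) * (y - x) = x ^ p * (1 + p * (y / x - 1)) := by
        rw [rpow_sub_one hx.ne']; field_simp
    _ ≤ x ^ p * (y ^ p / x ^ p) := by gcongr
    _ = y ^ p := by field_simp

theorem stmt_1 (x s : ℝ) (hx : 1 ≤ x) (hs : 1 ≤ s) :
    0 ≤ s * (x ^ s + x - x ^ (s - 1) - 1) - x ^ s + 1 := by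
  have tangent := rpow_add_mul_rpow_sub_one_mul_sub_le (x := x) (by linarith) zero_le_one hs
  rw [one_rpow] at tangent
  have hmul : x ^ (s - 1) * x = x ^ s := by
    rw [← rpow_add_one (by linarith)]; ring_nf
  nlinarith [mul_nonneg (by linarith : (0:ℝ) ≤ s) (by linarith : (0:ℝ) ≤ x - 1)]
end

section
/- Let n ≥ 4 be an integer and 0 < r < R. For each τ > 0 let w(t,τ) > 0 be the unique solution of w(n-1+w²)^{(n-3)/2} = τ/t, and define ψ(τ) = (n-2)(w(r,τ) - w(R,τ)) + (n-3)√(n-1)·(arctan(w(R,τ)/√(n-1)) - arctan(w(r,τ)/√(n-1))). Then ∂ψ/∂τ = (w(r,τ) - w(R,τ))/τ > 0, so ψ is strictly increasing in τ. -/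
/-!
With `F(w) = w (n-1+w²)^((n-3)/2)` (`slopeMap`) we have `w(t,τ) = F⁻¹(τ/t)`, and with
`φ(w) = (n-2) w - (n-3) √(n-1) arctan (w / √(n-1))` (`slopePotential`) we have
`ψ(τ) = φ(w(r,τ)) - φ(w(R,τ))`. Both `F'` and `φ'` carry the factor `(n-1) + (n-2) w²`, and in
fact `φ' F = w F'`. Differentiating `F(w(t,τ)) = τ/t` in `τ` therefore gives
`∂_τ φ(w(t,τ)) = w(t,τ)/τ`, while `w(r,τ) > w(R,τ)` because `F` is strictly increasing.
-/

open Real Set Filter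

noncomputable section

variable {n : ℝ}

def slopeMap (n w : ℝ) : ℝ := w * (n - 1 + w ^ 2) ^ ((n - 3) / 2)

def slopeMapDeriv (n w : ℝ) : ℝ := (n - 1 + w ^ 2) ^ ((n - 3) / 2 - 1) * ((n - 1) + (n - 2) * w ^ 2)

def slopePotential (n w : ℝ) : ℝ := (n - 2) * w - (n - 3) * √(n - 1) * arctan (w / √(n - 1))

theorem sub_one_add_sq_pos (hn : 1 < n) (w : ℝ) : 0 < n - 1 + w ^ 2 := by
  nlinarith [sq_nonneg w]

theorem hasDerivAt_slopeMap (hn : 1 < n) (w : ℝ) :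
    HasDerivAt (slopeMap n) (slopeMapDeriv n w) w := by
  have hbase : HasDerivAt (fun x => n - 1 + x ^ 2) (2 * w) w := by
    simpa using (hasDerivAt_pow 2 w).const_add (n - 1)
  have hB := sub_one_add_sq_pos hn w
  have hpow := hbase.rpow_const (p := (n - 3) / 2) (Or.inl hB.ne')
  refine ((hasDerivAt_id' w).mul hpow).congr_deriv ?_
  rw [slopeMapDeriv, rpow_sub_one hB.ne']
  field_simp
  ring

theorem slopeMapDeriv_pos (hn : 2 ≤ n) (w : ℝ) : 0 < slopeMapDeriv n w := by
  have hC : 0 < (n - 1) + (n - 2) * w ^ 2 := by nlinarith [sq_nonneg w]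
  exact mul_pos (rpow_pos_of_pos (sub_one_add_sq_pos (by linarith) w) _) hC

theorem slopeMap_strictMono (hn : 2 ≤ n) : StrictMono (slopeMap n) :=
  strictMono_of_deriv_pos fun w => by
    rw [(hasDerivAt_slopeMap (by linarith) w).deriv]
    exact slopeMapDeriv_pos hn w

theorem slopeMap_surjective (hn : 3 ≤ n) : Function.Surjective (slopeMap n) := by
  have hcont : Continuous (slopeMap n) :=
    continuous_iff_continuousAt.2 fun w =>
      (hasDerivAt_slopeMap (by linarith) w).continuousAt
  have hfactor : ∀ w : ℝ, 1 ≤ |w| → 1 ≤ (n - 1 + w ^ 2) ^ ((n - 3) / 2) := fun w hw =>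
    one_le_rpow (by nlinarith [sq_abs w]) (by linarith)
  have htop : Tendsto (slopeMap n) atTop atTop := by
    refine tendsto_atTop_mono' _ ?_ tendsto_id
    filter_upwards [eventually_ge_atTop (1 : ℝ)] with w hw
    have h := hfactor w (by rwa [abs_of_pos (by linarith)])
    simpa [slopeMap] using mul_le_mul_of_nonneg_left h (by linarith : (0 : ℝ) ≤ w)
  have hbot : Tendsto (slopeMap n) atBot atBot := by
    refine tendsto_atBot_mono' _ ?_ tendsto_id
    filter_upwards [eventually_le_atBot (-1 : ℝ)] with w hw
    have h := hfactor w (by rw [abs_of_neg (by linarith)]; linarith)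
    simpa [slopeMap] using mul_le_mul_of_nonpos_left h (by linarith : w ≤ 0)
  exact hcont.surjective htop hbot

def slopeMapOrderIso (hn : 3 ≤ n) : ℝ ≃o ℝ :=
  StrictMono.orderIsoOfSurjective (slopeMap n) (slopeMap_strictMono (by linarith))
    (slopeMap_surjective hn)

theorem slopeMap_slopeMapOrderIso_symm (hn : 3 ≤ n) (y : ℝ) :
    slopeMap n ((slopeMapOrderIso hn).symm y) = y :=
  StrictMono.orderIsoOfSurjective_self_symm_apply _ _ _ y

theorem hasDerivAt_slopeMapOrderIso_symm (hn : 3 ≤ n) (y : ℝ) :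
    HasDerivAt (slopeMapOrderIso hn).symm (slopeMapDeriv n ((slopeMapOrderIso hn).symm y))⁻¹ y :=
  HasDerivAt.of_local_left_inverse (slopeMapOrderIso hn).symm.continuous.continuousAt
    (hasDerivAt_slopeMap (by linarith) _) (slopeMapDeriv_pos (by linarith) _).ne'
    (Eventually.of_forall (slopeMap_slopeMapOrderIso_symm hn))

theorem hasDerivAt_slopePotential (hn : 1 < n) (w : ℝ) :
    HasDerivAt (slopePotential n) (((n - 1) + (n - 2) * w ^ 2) / (n - 1 + w ^ 2)) w := by
  have ha : 0 < √(n - 1) := sqrt_pos.2 (by linarith)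
  have ha2 : √(n - 1) ^ 2 = n - 1 := sq_sqrt (by linarith)
  have harctan := ((hasDerivAt_id' w).div_const √(n - 1)).arctan
  refine (((hasDerivAt_id' w).const_mul (n - 2)).sub
    (harctan.const_mul ((n - 3) * √(n - 1)))).congr_deriv ?_
  have hB := sub_one_add_sq_pos hn w
  have hn1 : n - 1 ≠ 0 := (sub_pos.2 hn).ne'
  have hquot : 1 + (w / √(n - 1)) ^ 2 = (n - 1 + w ^ 2) / (n - 1) := by
    rw [div_pow, ha2]
    field_simp
  rw [hquot]
  field_simp
  ring

theorem slopePotential_deriv_mul_slopeMap (hn : 1 < n) (w : ℝ) :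
    ((n - 1) + (n - 2) * w ^ 2) / (n - 1 + w ^ 2) * slopeMap n w = w * slopeMapDeriv n w := by
  have hB := sub_one_add_sq_pos hn w
  rw [slopeMap, slopeMapDeriv, rpow_sub_one hB.ne']
  field_simp

theorem hasDerivAt_slopePotential_comp (hn : 3 ≤ n) {t τ : ℝ} (hτ : 0 < τ)
    {w : ℝ → ℝ} (hw : ∀ σ ∈ Ioi (0 : ℝ), slopeMap n (w σ) = σ / t) :
    HasDerivAt (fun σ => slopePotential n (w σ)) (w τ / τ) τ := by
  have hn1 : 1 < n := by linarith
  have hn2 : 2 ≤ n := by linarith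
  have hw_eq : ∀ σ ∈ Ioi (0 : ℝ), w σ = (slopeMapOrderIso hn).symm (σ / t) := fun σ hσ =>
    (slopeMap_strictMono hn2).injective <| by rw [hw σ hσ, slopeMap_slopeMapOrderIso_symm]
  have hderiv_w : HasDerivAt w ((slopeMapDeriv n (w τ))⁻¹ * (1 / t)) τ := by
    have hdiv : HasDerivAt (fun σ => σ / t) (1 / t) τ := (hasDerivAt_id' τ).div_const t
    rw [hw_eq τ hτ]
    refine ((hasDerivAt_slopeMapOrderIso_symm hn (τ / t)).comp τ hdiv).congr_of_eventuallyEq ?_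
    filter_upwards [Ioi_mem_nhds hτ] with σ hσ using hw_eq σ hσ
  refine ((hasDerivAt_slopePotential hn1 (w τ)).comp τ hderiv_w).congr_deriv ?_
  have hkey := slopePotential_deriv_mul_slopeMap hn1 (w τ)
  rw [hw τ hτ] at hkey
  have hF' := (slopeMapDeriv_pos hn2 (w τ)).ne'
  field_simp at hkey ⊢
  linarith

end

theorem stmt_18 (n : ℕ) (hn : 4 ≤ n) (r R : ℝ) (hr : 0 < r) (hrR : r < R)
    (W : ℝ → ℝ → ℝ)
    (hW : ∀ t ∈ Ioi (0 : ℝ), ∀ τ ∈ Ioi (0 : ℝ), 0 < W t τ ∧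
        W t τ * ((n : ℝ) - 1 + W t τ ^ 2) ^ (((n : ℝ) - 3) / 2) = τ / t) :
    (∀ τ ∈ Ioi (0 : ℝ),
      HasDerivAt (fun τ : ℝ =>
          ((n : ℝ) - 2) * (W r τ - W R τ) +
            ((n : ℝ) - 3) * Real.sqrt ((n : ℝ) - 1) *
              (Real.arctan (W R τ / Real.sqrt ((n : ℝ) - 1)) -
                Real.arctan (W r τ / Real.sqrt ((n : ℝ) - 1))))
        ((W r τ - W R τ) / τ) τ ∧
      0 < (W r τ - W R τ) / τ) ∧
    StrictMonoOn (fun τ : ℝ =>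
        ((n : ℝ) - 2) * (W r τ - W R τ) +
          ((n : ℝ) - 3) * Real.sqrt ((n : ℝ) - 1) *
            (Real.arctan (W R τ / Real.sqrt ((n : ℝ) - 1)) -
              Real.arctan (W r τ / Real.sqrt ((n : ℝ) - 1))))
      (Ioi 0) := by
  have hn3 : (3 : ℝ) ≤ n := by exact_mod_cast (by omega : 3 ≤ n)
  have hn2 : (2 : ℝ) ≤ n := by linarith
  have hR : 0 < R := hr.trans hrR
  have hWF : ∀ t ∈ Ioi (0 : ℝ), ∀ σ ∈ Ioi (0 : ℝ), slopeMap n (W t σ) = σ / t :=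
    fun t ht σ hσ => (hW t ht σ hσ).2
  have hψ : (fun τ : ℝ => ((n : ℝ) - 2) * (W r τ - W R τ) +
      ((n : ℝ) - 3) * √((n : ℝ) - 1) *
        (arctan (W R τ / √((n : ℝ) - 1)) - arctan (W r τ / √((n : ℝ) - 1)))) =
      fun τ => slopePotential n (W r τ) - slopePotential n (W R τ) := by
    funext τ
    simp only [slopePotential]
    ring
  have hderiv : ∀ τ ∈ Ioi (0 : ℝ), HasDerivAt
      (fun τ => slopePotential n (W r τ) - slopePotential n (W R τ)) ((W r τ - W R τ) / τ) τ :=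
    fun τ hτ => sub_div (W r τ) (W R τ) τ ▸
      (hasDerivAt_slopePotential_comp hn3 hτ (hWF r hr)).sub
        (hasDerivAt_slopePotential_comp hn3 hτ (hWF R hR))
  have hlt : ∀ τ ∈ Ioi (0 : ℝ), W R τ < W r τ := fun τ hτ =>
    (slopeMap_strictMono hn2).lt_iff_lt.1 <| by
      rw [hWF r hr τ hτ, hWF R hR τ hτ]
      exact div_lt_div_of_pos_left hτ hr hrR
  have hpos : ∀ τ ∈ Ioi (0 : ℝ), 0 < (W r τ - W R τ) / τ := fun τ hτ =>
    div_pos (sub_pos.2 (hlt τ hτ)) hτ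
  rw [hψ]
  refine ⟨fun τ hτ => ⟨hderiv τ hτ, hpos τ hτ⟩, ?_⟩
  refine strictMonoOn_of_deriv_pos (convex_Ioi 0)
    (fun τ hτ => (hderiv τ hτ).continuousAt.continuousWithinAt) fun τ hτ => ?_
  rw [interior_Ioi] at hτ
  rw [(hderiv τ hτ).deriv]
  exact hpos τ hτ
end
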